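/- The Gaussian function Φ₀(x,t) = (πħ)^{−1/4}(Ω/μ)^{1/4} exp(−((iρ+Ω)/(2ħμ))x²)·exp(−(i/2)Ωt − (i/(2ħ))κ̃cC₅t) solves the stationary associated linear equation: −iħ∂ₜΦ₀ − (μħ²/2)∂ₓ²Φ₀ − iħρ(x∂ₓΦ₀ + Φ₀/2) + (σ̃/2)x²Φ₀ + (κ̃c/2)C₅Φ₀ = 0 for all (x,t). -/

import Mathlib

noncomputable section

/-- The Gaussian ground state
`Φ₀(x,t) = (πħ)^{−1/4}(Ω/μ)^{1/4} exp(−((iρ+Ω)/(2ħμ))x²)·exp(−(i/2)Ωt − (i/(2ħ))κ̃cC₅t)`. -/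
def Phi0 (hbar μ ρ c κt C₅ Ω : ℝ) (x t : ℝ) : ℂ :=
  (((Real.pi * hbar) ^ (-(1 / 4 : ℝ)) * (Ω / μ) ^ ((1 / 4 : ℝ)) : ℝ) : ℂ) *
    Complex.exp (-((Complex.I * (ρ : ℂ) + (Ω : ℂ)) / ((2 * hbar * μ : ℝ) : ℂ)) *
      (x : ℂ) ^ 2) *
    Complex.exp (-(Complex.I / 2) * (Ω : ℂ) * (t : ℂ)
      - (Complex.I / ((2 * hbar : ℝ) : ℂ)) * ((κt * c * C₅ : ℝ) : ℂ) * (t : ℂ))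

/-!
Applied to a separated Gaussian `A e^{a x²} e^{b t}`, the operator of the equation returns the
Gaussian times a polynomial `c₀ + c₂x²`, so the equation reduces to `c₀ = c₂ = 0`. With
`a = −(iρ + Ω)/(2ħμ)` the coefficient `c₂` is `(σ̃μ − ρ² − Ω²)/(2μ)`, which vanishes by the
choice of `Ω`; `c₀` vanishes because `b = −iE/ħ` with the energy `E = ħΩ/2 + κ̃cC₅/2`.
-/

open Complex

def gaussianWave (A a b : ℂ) (y τ : ℝ) : ℂ :=
  A * exp (a * (y : ℂ) ^ 2) * exp (b * (τ : ℂ))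

/-- The left-hand side of the stationary associated linear equation; `K` stands for `κ̃cC₅/2`. -/
def stationaryALE (hbar μ ρ σt K : ℝ) (Φ : ℝ → ℝ → ℂ) (x t : ℝ) : ℂ :=
  (-I * (hbar : ℂ)) * deriv (fun τ => Φ x τ) t
    - ((μ * hbar ^ 2 / 2 : ℝ) : ℂ) * deriv (fun y => deriv (fun z => Φ z t) y) x
    - I * (hbar : ℂ) * (ρ : ℂ) * ((x : ℂ) * deriv (fun y => Φ y t) x + Φ x t / 2)
    + ((σt / 2 * x ^ 2 : ℝ) : ℂ) * Φ x t
    + (K : ℂ) * Φ x t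

namespace gaussianWave

variable (A a b : ℂ)

theorem hasDerivAt_time (y t : ℝ) :
    HasDerivAt (fun τ => gaussianWave A a b y τ) (b * gaussianWave A a b y t) t := by
  have hlin : HasDerivAt (fun τ : ℝ => b * (τ : ℂ)) b t := by
    simpa using (hasDerivAt_id (t : ℂ)).comp_ofReal.const_mul b
  refine (hlin.cexp.const_mul (A * exp (a * (y : ℂ) ^ 2))).congr_deriv ?_
  unfold gaussianWave
  ring

theorem hasDerivAt_space (x t : ℝ) :
    HasDerivAt (fun y => gaussianWave A a b y t) (2 * a * x * gaussianWave A a b x t) x := by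
  have hquad : HasDerivAt (fun y : ℝ => a * (y : ℂ) ^ 2) (a * (2 * x)) x := by
    simpa using ((hasDerivAt_pow 2 (x : ℂ)).comp_ofReal).const_mul a
  refine ((hquad.cexp.const_mul A).mul_const (exp (b * (t : ℂ)))).congr_deriv ?_
  unfold gaussianWave
  ring

theorem deriv_space (t : ℝ) :
    deriv (fun y => gaussianWave A a b y t) = fun x => 2 * a * x * gaussianWave A a b x t :=
  funext fun x => (hasDerivAt_space A a b x t).deriv

theorem deriv_deriv_space (x t : ℝ) :
    deriv (deriv fun y => gaussianWave A a b y t) x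
      = (2 * a + 4 * a ^ 2 * (x : ℂ) ^ 2) * gaussianWave A a b x t := by
  have hlin : HasDerivAt (fun y : ℝ => 2 * a * (y : ℂ)) (2 * a) x := by
    simpa using (hasDerivAt_id (x : ℂ)).comp_ofReal.const_mul (2 * a)
  rw [deriv_space]
  refine ((hlin.mul (hasDerivAt_space A a b x t)).congr_deriv ?_).deriv
  ring

theorem stationaryALE_eq (hbar μ ρ σt K x t : ℝ) :
    stationaryALE hbar μ ρ σt K (gaussianWave A a b) x t
      = ((-I * hbar * b - μ * hbar ^ 2 * a - I * hbar * ρ / 2 + K)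
          + (σt / 2 - 2 * μ * hbar ^ 2 * a ^ 2 - 2 * I * hbar * ρ * a) * (x : ℂ) ^ 2)
        * gaussianWave A a b x t := by
  simp only [stationaryALE, (hasDerivAt_time A a b x t).deriv, deriv_deriv_space,
    (hasDerivAt_space A a b x t).deriv]
  push_cast
  ring

end gaussianWave

theorem Phi0_eq_gaussianWave (hbar μ ρ c κt C₅ Ω : ℝ) :
    Phi0 hbar μ ρ c κt C₅ Ω
      = gaussianWave (((Real.pi * hbar) ^ (-(1 / 4 : ℝ)) * (Ω / μ) ^ ((1 / 4 : ℝ)) : ℝ) : ℂ)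
          (-((I * ρ + Ω) / (2 * hbar * μ)))
          (-(I / 2) * Ω - I / (2 * hbar) * (κt * c * C₅)) := by
  funext x t
  simp only [Phi0, gaussianWave]
  push_cast
  ring_nf

/-- `Φ₀` solves the stationary associated linear equation. -/
theorem gaussian_solves_stationary_ALE
    (hbar μ ρ c κt C₅ σt Ω : ℝ) (h_hbar : 0 < hbar) (hμ : 0 < μ)
    (hpos : 0 < σt * μ - ρ ^ 2) (hΩ : Ω = Real.sqrt (σt * μ - ρ ^ 2)) :
    ∀ x t : ℝ,
      (-Complex.I * (hbar : ℂ)) * deriv (fun τ => Phi0 hbar μ ρ c κt C₅ Ω x τ) t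
        - ((μ * hbar ^ 2 / 2 : ℝ) : ℂ) *
            deriv (fun y => deriv (fun z => Phi0 hbar μ ρ c κt C₅ Ω z t) y) x
        - Complex.I * (hbar : ℂ) * (ρ : ℂ) *
            ((x : ℂ) * deriv (fun y => Phi0 hbar μ ρ c κt C₅ Ω y t) x
              + Phi0 hbar μ ρ c κt C₅ Ω x t / 2)
        + ((σt / 2 * x ^ 2 : ℝ) : ℂ) * Phi0 hbar μ ρ c κt C₅ Ω x t
        + ((κt * c / 2 * C₅ : ℝ) : ℂ) * Phi0 hbar μ ρ c κt C₅ Ω x t = 0 := by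
  intro x t
  change stationaryALE hbar μ ρ σt (κt * c / 2 * C₅) (Phi0 hbar μ ρ c κt C₅ Ω) x t = 0
  have hΩsq : (Ω : ℂ) ^ 2 = σt * μ - ρ ^ 2 := by
    exact_mod_cast hΩ ▸ Real.sq_sqrt hpos.le
  have hhbar : (hbar : ℂ) ≠ 0 := ofReal_ne_zero.mpr h_hbar.ne'
  have hμ' : (μ : ℂ) ≠ 0 := ofReal_ne_zero.mpr hμ.ne'
  rw [Phi0_eq_gaussianWave, gaussianWave.stationaryALE_eq]
  apply mul_eq_zero_of_left
  have hconst : -I * hbar * (-(I / 2) * Ω - I / (2 * hbar) * (κt * c * C₅))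
      - μ * hbar ^ 2 * (-((I * ρ + Ω) / (2 * hbar * μ))) - I * hbar * ρ / 2
      + ((κt * c / 2 * C₅ : ℝ) : ℂ) = 0 := by
    field_simp
    push_cast
    linear_combination (hbar * Ω + κt * c * C₅) * I_sq
  have hquad : σt / 2 - 2 * μ * hbar ^ 2 * (-((I * ρ + Ω) / (2 * hbar * μ))) ^ 2
      - 2 * I * hbar * ρ * (-((I * ρ + Ω) / (2 * hbar * μ))) = 0 := by
    field_simp
    linear_combination (-1 : ℂ) * hΩsq + ρ ^ 2 * I_sq
  rw [hconst, hquad, zero_mul, add_zero]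

end
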